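/- arXiv:0912.5287 — 4 statements merged into one kernel-verified Lean document; each statement's English description precedes it below -/
import Mathlib

section
/- Let (μ_k) and (ν_k) be sequences of probability measures with μ_k equivalent to ν_k for every k, and let μ and ν denote the infinite product measures on the product space. If ∏_{k=1}^∞ ρ(μ_k, ν_k) = 0, where ρ denotes the Hellinger affinity, then μ and ν are mutually singular. -/
/-!
Let `X_n(ω) = ∏_{k<n} √(dμ_k/dν_k)(ω_k)`. The coordinates are independent under both product
measures, so `∫ X_n dν = ∏_{k<n} ρ(μ_k, ν_k)`, and a change of measure in each factor gives
`∫ X_n⁻¹ dμ = ∏_{k<n} ρ(μ_k, ν_k)` as well. By Markov's inequality `ν {X_n ≥ 1} → 0` and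
`μ {X_n < 1} → 0`, and their sum bounds the total mass of `μ ⊓ ν`, which is therefore `0`.
-/

open MeasureTheory

/-- `μ` is the infinite product of the measures `μs` on the countable product space:
it gives every measurable cylinder the product of the corresponding measures. -/
def IsProductMeasure {Ω : Type*} [MeasurableSpace Ω]
    (μ : Measure (ℕ → Ω)) (μs : ℕ → Measure Ω) : Prop :=
  ∀ (s : Finset ℕ) (t : ℕ → Set Ω), (∀ i, MeasurableSet (t i)) →
    μ {f | ∀ i ∈ s, f i ∈ t i} = ∏ i ∈ s, μs i (t i)

open Filter Topology ProbabilityTheory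
open scoped ENNReal

theorem IsProductMeasure.eq_infinitePi {Ω : Type*} [MeasurableSpace Ω] {μ : Measure (ℕ → Ω)}
    {μs : ℕ → Measure Ω} [∀ k, IsProbabilityMeasure (μs k)] (h : IsProductMeasure μ μs) :
    μ = Measure.infinitePi μs :=
  Measure.eq_infinitePi μs h

theorem lintegral_infinitePi_finset_prod {ι : Type*} {Ω : ι → Type*}
    [∀ i, MeasurableSpace (Ω i)] (P : ∀ i, Measure (Ω i)) [∀ i, IsProbabilityMeasure (P i)]
    (s : Finset ι) {h : ∀ i, Ω i → ℝ≥0∞} (hh : ∀ i, Measurable (h i)) :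
    ∫⁻ ω, ∏ i ∈ s, h i (ω i) ∂Measure.infinitePi P = ∏ i ∈ s, ∫⁻ x, h i x ∂P i := by
  rw [lintegral_prod_eq_prod_lintegral_of_indepFun s _ (iIndepFun_infinitePi hh)
    fun i => (hh i).comp (measurable_pi_apply i)]
  exact Finset.prod_congr rfl fun i _ =>
    (measurePreserving_eval_infinitePi P i).lintegral_comp (hh i)

namespace MeasureTheory.Measure

variable {α : Type*} [MeasurableSpace α] {μ ν : Measure α}

lemma inf_apply_univ_le (A : Set α) : (μ ⊓ ν) Set.univ ≤ μ Aᶜ + ν A := by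
  rw [inf_apply .univ]
  exact sInf_le ⟨Aᶜ, by simp⟩

theorem mutuallySingular_of_tendsto_measure {ι : Type*} {l : Filter ι} [l.NeBot] {A : ι → Set α}
    (h : Tendsto (fun i => μ (A i)ᶜ + ν (A i)) l (𝓝 0)) : μ ⟂ₘ ν := by
  rw [mutuallySingular_iff_disjoint, disjoint_iff]
  exact measure_univ_eq_zero.1 <|
    le_antisymm (ge_of_tendsto' h fun i => inf_apply_univ_le (A i)) bot_le

/-- Witnessed by the sets `{f i ≥ 1}`, through Markov's inequality for `f i` under `ν` and for
`(f i)⁻¹` under `μ`. -/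
theorem mutuallySingular_of_tendsto_lintegral {ι : Type*} {l : Filter ι} [l.NeBot]
    {f : ι → α → ℝ≥0∞} (hf : ∀ i, AEMeasurable (f i) ν) (hf' : ∀ i, AEMeasurable (f i)⁻¹ μ)
    (hν : Tendsto (fun i => ∫⁻ x, f i x ∂ν) l (𝓝 0))
    (hμ : Tendsto (fun i => ∫⁻ x, (f i x)⁻¹ ∂μ) l (𝓝 0)) : μ ⟂ₘ ν := by
  refine mutuallySingular_of_tendsto_measure (l := l) (A := fun i => {x | 1 ≤ f i x}) ?_
  refine tendsto_of_tendsto_of_tendsto_of_le_of_le tendsto_const_nhds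
    (by simpa using hμ.add hν) (fun _ => zero_le) fun i => add_le_add ?_ ?_
  · calc μ {x | 1 ≤ f i x}ᶜ ≤ μ {x | 1 ≤ (f i x)⁻¹} :=
          measure_mono fun x hx => (ENNReal.one_lt_inv.2 (not_le.1 hx)).le
      _ ≤ ∫⁻ x, (f i x)⁻¹ ∂μ := by simpa using mul_meas_ge_le_lintegral₀ (hf' i) 1
  · simpa using mul_meas_ge_le_lintegral₀ (hf i) 1

end MeasureTheory.Measure

lemma ENNReal.ofReal_mul_inv_ofReal_sqrt (t : ℝ) :
    ENNReal.ofReal t * (ENNReal.ofReal √t)⁻¹ = ENNReal.ofReal √t := by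
  rcases le_or_gt t 0 with ht | ht
  · simp [ENNReal.ofReal_of_nonpos ht, Real.sqrt_eq_zero'.2 ht]
  have hs : 0 < √t := Real.sqrt_pos.2 ht
  calc ENNReal.ofReal t * (ENNReal.ofReal √t)⁻¹
      = ENNReal.ofReal √t * ENNReal.ofReal √t * (ENNReal.ofReal √t)⁻¹ := by
        rw [← ENNReal.ofReal_mul hs.le, Real.mul_self_sqrt ht.le]
    _ = ENNReal.ofReal √t :=
        ENNReal.mul_inv_cancel_right (ENNReal.ofReal_pos.2 hs).ne' ENNReal.ofReal_ne_top

section Hellinger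

variable {α : Type*} [MeasurableSpace α]

/-- `√(dμ/dν)`; it is `0` where `dμ/dν = ∞`, a `ν`-null set. -/
noncomputable def sqrtRnDeriv (μ ν : Measure α) (x : α) : ℝ≥0∞ :=
  ENNReal.ofReal √(μ.rnDeriv ν x).toReal

/-- The Hellinger affinity `ρ(μ, ν)`, computed with `τ = ν`. -/
noncomputable def hellingerAffinity (μ ν : Measure α) : ℝ≥0∞ :=
  ∫⁻ x, sqrtRnDeriv μ ν x ∂ν

variable {μ ν : Measure α}

@[fun_prop]
lemma measurable_sqrtRnDeriv : Measurable (sqrtRnDeriv μ ν) :=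
  ENNReal.measurable_ofReal.comp (Measure.measurable_rnDeriv μ ν).ennreal_toReal.sqrt

lemma integrable_sqrt_toReal_rnDeriv [IsFiniteMeasure μ] [IsFiniteMeasure ν] :
    Integrable (fun x => √(μ.rnDeriv ν x).toReal) ν := by
  refine ((integrable_const 1).add (Measure.integrable_toReal_rnDeriv (μ := μ) (ν := ν))).mono
    (Measure.measurable_rnDeriv μ ν).ennreal_toReal.sqrt.aestronglyMeasurable
    (ae_of_all _ fun x => ?_)
  have ht : 0 ≤ (μ.rnDeriv ν x).toReal := ENNReal.toReal_nonneg
  rw [Pi.add_apply, Real.norm_of_nonneg (Real.sqrt_nonneg _), Real.norm_of_nonneg (by positivity)]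
  nlinarith [Real.sq_sqrt ht, Real.sqrt_nonneg (μ.rnDeriv ν x).toReal]

lemma hellingerAffinity_eq_ofReal_integral [IsFiniteMeasure μ] [IsFiniteMeasure ν] :
    hellingerAffinity μ ν = ENNReal.ofReal (∫ x, √(μ.rnDeriv ν x).toReal ∂ν) :=
  (ofReal_integral_eq_lintegral_ofReal integrable_sqrt_toReal_rnDeriv
    (ae_of_all _ fun _ => Real.sqrt_nonneg _)).symm

/-- Change of measure: `∫ (dμ/dν)^{-1/2} dμ = ∫ (dμ/dν) (dμ/dν)^{-1/2} dν = ρ(μ, ν)`. -/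
lemma lintegral_inv_sqrtRnDeriv [SigmaFinite μ] [SigmaFinite ν] (hμν : μ ≪ ν) :
    ∫⁻ x, (sqrtRnDeriv μ ν x)⁻¹ ∂μ = hellingerAffinity μ ν := by
  rw [← lintegral_rnDeriv_mul hμν (by fun_prop), hellingerAffinity]
  refine lintegral_congr_ae ?_
  filter_upwards [Measure.rnDeriv_lt_top μ ν] with x hx
  nth_rewrite 1 [← ENNReal.ofReal_toReal hx.ne]
  exact ENNReal.ofReal_mul_inv_ofReal_sqrt _

end Hellinger

theorem mutuallySingular_infinitePi_of_tendsto_prod_hellingerAffinity {Ω : Type*}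
    [MeasurableSpace Ω] {μs νs : ℕ → Measure Ω} [∀ k, IsProbabilityMeasure (μs k)]
    [∀ k, IsProbabilityMeasure (νs k)] (hac : ∀ k, μs k ≪ νs k)
    (h : Tendsto (fun n => ∏ k ∈ Finset.range n, hellingerAffinity (μs k) (νs k)) atTop (𝓝 0)) :
    Measure.infinitePi μs ⟂ₘ Measure.infinitePi νs := by
  set X : ℕ → (ℕ → Ω) → ℝ≥0∞ :=
    fun n ω => ∏ k ∈ Finset.range n, sqrtRnDeriv (μs k) (νs k) (ω k) with hX
  have hX_inv : ∀ n ω, (X n ω)⁻¹ = ∏ k ∈ Finset.range n, (sqrtRnDeriv (μs k) (νs k) (ω k))⁻¹ :=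
    fun n ω => ENNReal.prod_inv_distrib fun _ _ _ _ _ => Or.inr ENNReal.ofReal_ne_top
  refine Measure.mutuallySingular_of_tendsto_lintegral (l := atTop) (f := X)
    (fun _ => by fun_prop) (fun _ => by fun_prop) ?_ ?_
  · simpa only [hX, lintegral_infinitePi_finset_prod _ _ fun k => measurable_sqrtRnDeriv,
      hellingerAffinity] using h
  · simpa only [hX_inv, lintegral_infinitePi_finset_prod _ _
      (h := fun k x => (sqrtRnDeriv (μs k) (νs k) x)⁻¹) fun k => measurable_sqrtRnDeriv.inv,
      lintegral_inv_sqrtRnDeriv (hac _)] using h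

/-- Kakutani's dichotomy (singular case): if `μ_k ∼ ν_k` are equivalent probability measures
for all `k` and the infinite product of the Hellinger affinities
`ρ(μ_k, ν_k) = ∫ √(dμ_k/dν_k) dν_k` is `0`, then the infinite product measures are
mutually singular. -/
theorem stmt4 {Ω : Type*} [MeasurableSpace Ω] (μs νs : ℕ → Measure Ω)
    (hμp : ∀ k, IsProbabilityMeasure (μs k)) (hνp : ∀ k, IsProbabilityMeasure (νs k))
    (hequiv : ∀ k, μs k ≪ νs k ∧ νs k ≪ μs k)
    (hρ : Filter.Tendsto
      (fun n => ∏ k ∈ Finset.range n,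
        ∫ x, Real.sqrt ((μs k).rnDeriv (νs k) x).toReal ∂(νs k))
      Filter.atTop (nhds 0))
    (μ ν : Measure (ℕ → Ω))
    (hμ : IsProductMeasure μ μs) (hν : IsProductMeasure ν νs) :
    μ.MutuallySingular ν := by
  rw [hμ.eq_infinitePi, hν.eq_infinitePi]
  refine mutuallySingular_infinitePi_of_tendsto_prod_hellingerAffinity (fun k => (hequiv k).1) ?_
  simpa only [hellingerAffinity_eq_ofReal_integral, ENNReal.ofReal_prod_of_nonneg
    fun k _ => integral_nonneg fun x => Real.sqrt_nonneg _, ENNReal.ofReal_zero]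
    using ENNReal.tendsto_ofReal hρ
end

section
/- Let f be analytic on the open unit disk with continuous extension to a region, and suppose |∂F/∂z(z)| ≤ C·(1-|z|)^{-(1-σ)} for all z on the line segment l joining two points z₁, z₂ in the disk, where 0 < σ < 1. If the segment l lies in the Stolz region {z : |e^{ix} - z| ≤ 2(1-|z|)}, then |F(z₁) - F(z₂)| ≤ C' · |z₁ - z₂|^σ for a constant C' depending only on C and σ. -/
/-!
Since `|e^{ix} - z₁| + |e^{ix} - z₂| ≥ |z₁ - z₂|`, the segment `[z₁, z₂]` contains a point `w` with
`|w - zᵢ| ≤ |e^{ix} - zᵢ|` for `i = 1, 2`. By the triangle inequality every `ζ` of `[zᵢ, w]` then satisfies `|ζ - w| ≤ |e^{ix} - ζ| ≤ 2 (1 - |ζ|)`,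
so the derivative bound becomes `|F'(ζ)| ≤ 2^{1-σ} C |ζ - w|^{σ-1}`, an integrable singularity at
the endpoint `w`. Integrating it along `[zᵢ, w]` gives `|F(zᵢ) - F(w)| ≤ 2^{1-σ} C |zᵢ - w|^σ / σ`.
-/

open Complex Set

theorem norm_sub_le_of_norm_deriv_le_rpow_sub {E : Type*} [NormedAddCommGroup E]
    [NormedSpace ℝ E] {f f' : ℝ → E} {a b K σ : ℝ} (hσ : 0 < σ) (hab : a ≤ b)
    (hf : ContinuousOn f (Icc a b)) (hf' : ∀ t ∈ Ico a b, HasDerivAt f (f' t) t)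
    (bound : ∀ t ∈ Ico a b, ‖f' t‖ ≤ K * (b - t) ^ (σ - 1)) :
    ‖f b - f a‖ ≤ K / σ * (b - a) ^ σ := by
  have hB : ∀ t ∈ Ico a b, HasDerivAt (fun s => K / σ * ((b - a) ^ σ - (b - s) ^ σ))
      (K * (b - t) ^ (σ - 1)) t := by
    intro t ht
    have h := ((((hasDerivAt_id t).const_sub b).rpow_const (p := σ)
      (Or.inl (sub_ne_zero.2 ht.2.ne'))).const_sub ((b - a) ^ σ)).const_mul (K / σ)
    refine h.congr_deriv ?_
    simp only [id]
    field_simp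
  have hBcont : ContinuousOn (fun s => K / σ * ((b - a) ^ σ - (b - s) ^ σ)) (Icc a b) := by
    have := Real.continuous_rpow_const hσ.le
    fun_prop
  have key := image_norm_le_of_norm_deriv_right_le_deriv_boundary' (f := fun t => f t - f a)
    (hf.sub continuousOn_const) (fun t ht => ((hf' t ht).sub_const (f a)).hasDerivWithinAt)
    (by simp) hBcont (fun t ht => (hB t ht).hasDerivWithinAt) bound (right_mem_Icc.2 hab)
  simpa [Real.zero_rpow hσ.ne'] using key

theorem norm_sub_le_of_norm_deriv_le_rpow_dist {E : Type*} [NormedAddCommGroup E]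
    [NormedSpace ℂ E] {F : ℂ → E} {z w : ℂ} {K σ : ℝ} (hσ : 0 < σ)
    (hF : ∀ ζ ∈ segment ℝ z w, DifferentiableAt ℂ F ζ)
    (bound : ∀ ζ ∈ segment ℝ z w, ζ ≠ w → ‖deriv F ζ‖ ≤ K * ‖ζ - w‖ ^ (σ - 1)) :
    ‖F z - F w‖ ≤ K / σ * ‖z - w‖ ^ σ := by
  obtain rfl | hzw := eq_or_ne z w
  · simp [Real.zero_rpow hσ.ne']
  set L := ‖z - w‖
  have hL : 0 < L := norm_pos_iff.2 (sub_ne_zero.2 hzw)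
  set γ : ℝ → ℂ := ⇑(AffineMap.lineMap (k := ℝ) z w)
  have hγ : ∀ t ∈ Icc (0 : ℝ) 1, γ t ∈ segment ℝ z w := by
    rw [segment_eq_image_lineMap]
    exact fun t ht => mem_image_of_mem _ ht
  have hγw : ∀ t, ‖γ t - w‖ = |1 - t| * L := fun t => by
    rw [← dist_eq_norm, dist_lineMap_right, dist_eq_norm, Real.norm_eq_abs]
  have hderiv : ∀ t ∈ Icc (0 : ℝ) 1, HasDerivAt (F ∘ γ) ((w - z) • deriv F (γ t)) t :=
    fun t ht => (hF _ (hγ t ht)).hasDerivAt.scomp t AffineMap.hasDerivAt_lineMap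
  have hbound : ∀ t ∈ Ico (0 : ℝ) 1,
      ‖(w - z) • deriv F (γ t)‖ ≤ K * L ^ σ * (1 - t) ^ (σ - 1) := by
    intro t ht
    have h1t : 0 < 1 - t := sub_pos.2 ht.2
    have hγt := hγw t
    rw [abs_of_pos h1t] at hγt
    have hne : γ t ≠ w := by
      rw [← sub_ne_zero, ← norm_pos_iff, hγt]
      positivity
    calc ‖(w - z) • deriv F (γ t)‖ = L * ‖deriv F (γ t)‖ := by rw [norm_smul, norm_sub_rev]
      _ ≤ L * (K * ((1 - t) * L) ^ (σ - 1)) := by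
        rw [← hγt]
        exact mul_le_mul_of_nonneg_left (bound _ (hγ t (Ico_subset_Icc_self ht)) hne) hL.le
      _ = K * L ^ σ * (1 - t) ^ (σ - 1) := by
        rw [Real.mul_rpow h1t.le hL.le, Real.rpow_sub_one hL.ne']
        field_simp
  have h := norm_sub_le_of_norm_deriv_le_rpow_sub hσ zero_le_one
    (fun t ht => (hderiv t ht).continuousAt.continuousWithinAt)
    (fun t ht => hderiv t (Ico_subset_Icc_self ht)) hbound
  simpa [γ, norm_sub_rev (F z), mul_div_right_comm] using h

theorem exists_mem_segment_dist_le {E : Type*} [NormedAddCommGroup E] [NormedSpace ℝ E]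
    (p x y : E) : ∃ w ∈ segment ℝ x y, dist w x ≤ dist p x ∧ dist w y ≤ dist p y := by
  by_cases hxy : dist x y ≤ dist p x
  · exact ⟨y, right_mem_segment ℝ x y, by rwa [dist_comm], by simp⟩
  rw [not_le] at hxy
  have hpos : 0 < dist x y := dist_nonneg.trans_lt hxy
  set t := dist p x / dist x y
  have ht : t ∈ Icc (0 : ℝ) 1 := ⟨by positivity, div_le_one_of_le₀ hxy.le hpos.le⟩
  refine ⟨AffineMap.lineMap x y t, segment_eq_image_lineMap ℝ x y ▸ mem_image_of_mem _ ht, ?_, ?_⟩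
  · rw [dist_lineMap_left, Real.norm_of_nonneg ht.1, div_mul_cancel₀ _ hpos.ne']
  · rw [dist_lineMap_right, Real.norm_of_nonneg (sub_nonneg.2 ht.2), sub_mul,
      div_mul_cancel₀ _ hpos.ne', one_mul]
    linarith [dist_triangle x p y, dist_comm x p]

theorem dist_le_dist_of_mem_segment {E : Type*} [NormedAddCommGroup E] [NormedSpace ℝ E]
    {p x w ζ : E} (hζ : ζ ∈ segment ℝ x w) (hw : dist w x ≤ dist p x) : dist ζ w ≤ dist p ζ := by
  have h := dist_add_dist_of_mem_segment hζ
  have := dist_triangle p ζ x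
  rw [dist_comm w x] at hw
  rw [dist_comm x ζ] at h
  linarith

theorem rpow_neg_one_sub_le_of_le_two_mul {s d σ : ℝ} (hσ : σ ≤ 1) (hd : 0 < d)
    (hds : d ≤ 2 * s) : s ^ (-(1 - σ)) ≤ 2 ^ (1 - σ) * d ^ (σ - 1) := by
  calc s ^ (-(1 - σ)) ≤ (d / 2) ^ (-(1 - σ)) :=
        Real.rpow_le_rpow_of_nonpos (by positivity) (by linarith) (by linarith)
    _ = 2 ^ (1 - σ) * d ^ (σ - 1) := by
        rw [Real.div_rpow hd.le zero_le_two, Real.rpow_neg zero_le_two, neg_sub]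
        field_simp

theorem norm_sub_le_of_stolz {E : Type*} [NormedAddCommGroup E] [NormedSpace ℂ E]
    {F : ℂ → E} {C σ : ℝ} {p z w : ℂ} (hC : 0 ≤ C) (hσ0 : 0 < σ) (hσ1 : σ ≤ 1)
    (hw : dist w z ≤ dist p z)
    (h : ∀ ζ ∈ segment ℝ z w, DifferentiableAt ℂ F ζ ∧ ‖p - ζ‖ ≤ 2 * (1 - ‖ζ‖) ∧
      ‖deriv F ζ‖ ≤ C * (1 - ‖ζ‖) ^ (-(1 - σ))) :
    ‖F z - F w‖ ≤ C * 2 ^ (1 - σ) / σ * ‖z - w‖ ^ σ := by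
  refine norm_sub_le_of_norm_deriv_le_rpow_dist hσ0 (fun ζ hζ => (h ζ hζ).1) fun ζ hζ hne => ?_
  obtain ⟨-, hstolz, hderiv⟩ := h ζ hζ
  have hdist : ‖ζ - w‖ ≤ 2 * (1 - ‖ζ‖) := by
    have h := dist_le_dist_of_mem_segment hζ hw
    rw [dist_eq_norm, dist_eq_norm] at h
    exact h.trans hstolz
  calc ‖deriv F ζ‖ ≤ C * (1 - ‖ζ‖) ^ (-(1 - σ)) := hderiv
    _ ≤ C * (2 ^ (1 - σ) * ‖ζ - w‖ ^ (σ - 1)) := mul_le_mul_of_nonneg_left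
        (rpow_neg_one_sub_le_of_le_two_mul hσ1 (norm_pos_iff.2 (sub_ne_zero.2 hne)) hdist) hC
    _ = C * 2 ^ (1 - σ) * ‖ζ - w‖ ^ (σ - 1) := by ring

/-- If `F` is analytic on the open unit disk and `‖F'(z)‖ ≤ C (1-|z|)^{-(1-σ)}` on the
segment `l` joining `z₁` and `z₂`, and `l` lies in the Stolz region
`{z : |e^{ix} - z| ≤ 2(1-|z|)}` (inside the disk), then `‖F z₁ - F z₂‖ ≤ C' ‖z₁ - z₂‖^σ`
for a constant `C'` depending only on `C` and `σ`. -/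
theorem stmt10 (C σ : ℝ) (hC : 0 < C) (hσ0 : 0 < σ) (hσ1 : σ < 1) :
    ∃ C' > (0 : ℝ), ∀ (F : ℂ → ℂ) (x : ℝ) (z₁ z₂ : ℂ),
      DifferentiableOn ℂ F (Metric.ball 0 1) →
      (∀ z ∈ segment ℝ z₁ z₂, ‖z‖ < 1 ∧
        ‖Complex.exp (x * Complex.I) - z‖ ≤ 2 * (1 - ‖z‖) ∧
        ‖deriv F z‖ ≤ C * (1 - ‖z‖) ^ (-(1 - σ))) →
      ‖F z₁ - F z₂‖ ≤ C' * ‖z₁ - z₂‖ ^ σ := by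
  refine ⟨2 * (C * 2 ^ (1 - σ) / σ), by positivity, fun F x z₁ z₂ hF hseg => ?_⟩
  set K := C * 2 ^ (1 - σ) / σ
  have hstolz : ∀ ζ ∈ segment ℝ z₁ z₂, DifferentiableAt ℂ F ζ ∧
      ‖exp (x * I) - ζ‖ ≤ 2 * (1 - ‖ζ‖) ∧ ‖deriv F ζ‖ ≤ C * (1 - ‖ζ‖) ^ (-(1 - σ)) :=
    fun ζ hζ => ⟨hF.differentiableAt (Metric.isOpen_ball.mem_nhds
      (mem_ball_zero_iff.2 (hseg ζ hζ).1)), (hseg ζ hζ).2⟩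
  obtain ⟨w, hw, hw₁, hw₂⟩ := exists_mem_segment_dist_le (exp (x * I)) z₁ z₂
  have h₁ := norm_sub_le_of_stolz hC.le hσ0 hσ1.le hw₁ fun ζ hζ =>
    hstolz ζ ((convex_segment z₁ z₂).segment_subset (left_mem_segment ℝ z₁ z₂) hw hζ)
  have h₂ := norm_sub_le_of_stolz hC.le hσ0 hσ1.le hw₂ fun ζ hζ =>
    hstolz ζ ((convex_segment z₁ z₂).segment_subset (right_mem_segment ℝ z₁ z₂) hw hζ)
  have hsplit : ‖z₁ - w‖ + ‖w - z₂‖ = ‖z₁ - z₂‖ := by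
    simpa only [dist_eq_norm] using dist_add_dist_of_mem_segment hw
  calc ‖F z₁ - F z₂‖ ≤ ‖F z₁ - F w‖ + ‖F z₂ - F w‖ := by
        simpa only [dist_eq_norm] using dist_triangle_right (F z₁) (F z₂) (F w)
    _ ≤ K * ‖z₁ - w‖ ^ σ + K * ‖z₂ - w‖ ^ σ := add_le_add h₁ h₂
    _ ≤ K * ‖z₁ - z₂‖ ^ σ + K * ‖z₁ - z₂‖ ^ σ := by
        gcongr
        · linarith [norm_nonneg (w - z₂)]
        · linarith [norm_nonneg (z₁ - w), norm_sub_rev z₂ w]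
    _ = 2 * K * ‖z₁ - z₂‖ ^ σ := by ring
end

section
/- Let (w_n) be a Blaschke sequence in the unit disk, i.e., ∑(1-|w_n|) < ∞, and define v(z) = ∑_n (1-|z|²)/|z - w_n/|w_n||² · (1-|w_n|) for |z| < 1. Let y be a point on the unit circle such that |y - w_n/|w_n|| ≥ 4(1-|w_n|) for all n ≥ n₀. Then there is a constant C > 0 such that for every z with |z| < 1 and |y - z/|z|| ≤ 2(1-|z|), the Blaschke product B(z) formed from (w_n) satisfies log|B(z)| ≥ -C·v(z) (modulo the finitely many factors with n < n₀). -/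
open Complex ComplexConjugate

/-!
For a single factor, `‖1 - w̄z‖² = ‖w - z‖² + (1 - ‖w‖²)(1 - ‖z‖²)` and `log x ≥ 1 - 1/x` give
`-log ‖(w - z)/(1 - w̄z)‖ ≤ (1 - ‖w‖²)(1 - ‖z‖²) / (2‖w - z‖²)`. If `z` lies in the Stolz region
at `y` and `w` is separated from `y` by `4(1 - ‖w‖)`, the triangle inequality through `y` and the
radial projections gives `1 - ‖w‖ ≤ 3‖z - w‖`, hence `‖z - w/‖w‖‖ ≤ 4‖z - w‖`; so each factor is
bounded below by `-16` times the corresponding term of `v(z)`. The terms of `v(z)` are dominated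
by a multiple of `1 - ‖w_n‖` and every logarithm is nonpositive, so both series converge and the
bound passes to the sums.
-/

lemma norm_one_sub_conj_mul_sq (w z : ℂ) :
    ‖1 - conj w * z‖ ^ 2 = ‖w - z‖ ^ 2 + (1 - ‖w‖ ^ 2) * (1 - ‖z‖ ^ 2) := by
  simp only [Complex.sq_norm, normSq_apply, sub_re, sub_im, one_re, one_im, mul_re, mul_im, conj_re,
    conj_im]
  ring

lemma log_norm_blaschkeFactor_nonpos {w z : ℂ} (hw : ‖w‖ ≤ 1) (hz : ‖z‖ ≤ 1) :
    Real.log ‖(w - z) / (1 - conj w * z)‖ ≤ 0 := by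
  refine Real.log_nonpos (norm_nonneg _) ?_
  rw [norm_div]
  refine div_le_one_of_le₀ ?_ (norm_nonneg _)
  rw [← sq_le_sq₀ (norm_nonneg _) (norm_nonneg _), norm_one_sub_conj_mul_sq]
  have : 0 ≤ (1 - ‖w‖ ^ 2) * (1 - ‖z‖ ^ 2) :=
    mul_nonneg (by nlinarith [norm_nonneg w]) (by nlinarith [norm_nonneg z])
  linarith

lemma neg_div_le_log_norm_blaschkeFactor {w z : ℂ} (hw : ‖w‖ < 1) (hz : ‖z‖ < 1) (hwz : w ≠ z) :
    -((1 - ‖w‖ ^ 2) * (1 - ‖z‖ ^ 2) / (2 * ‖w - z‖ ^ 2)) ≤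
      Real.log ‖(w - z) / (1 - conj w * z)‖ := by
  have hd2 := norm_one_sub_conj_mul_sq w z
  set a := ‖w - z‖
  set d := ‖1 - conj w * z‖
  have ha : 0 < a := norm_pos_iff.2 (sub_ne_zero.2 hwz)
  have hP : 0 < (1 - ‖w‖ ^ 2) * (1 - ‖z‖ ^ 2) :=
    mul_pos (by nlinarith [norm_nonneg w]) (by nlinarith [norm_nonneg z])
  have hd : 0 < d := by nlinarith [norm_nonneg (1 - conj w * z)]
  have hlog := Real.one_sub_inv_le_log_of_pos (x := (a / d) ^ 2) (by positivity)
  rw [Real.log_pow, norm_div] at *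
  calc -((1 - ‖w‖ ^ 2) * (1 - ‖z‖ ^ 2) / (2 * a ^ 2)) = (1 - ((a / d) ^ 2)⁻¹) / 2 := by
        field_simp
        linarith
    _ ≤ Real.log (a / d) := by push_cast at hlog; linarith

lemma norm_div_norm {v : ℂ} (hv : v ≠ 0) : ‖v / ‖v‖‖ = 1 := by
  rw [norm_div, norm_real, norm_norm, div_self (norm_ne_zero_iff.2 hv)]

lemma norm_sub_div_norm_self {v : ℂ} (hv : v ≠ 0) : ‖v - v / ‖v‖‖ = |1 - ‖v‖| := by
  have hv' : (‖v‖ : ℂ) ≠ 0 := ofReal_ne_zero.2 (norm_ne_zero_iff.2 hv)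
  have : v - v / ‖v‖ = v / ‖v‖ * ((‖v‖ - 1 : ℝ) : ℂ) := by
    push_cast
    field_simp
  rw [this, norm_mul, norm_div_norm hv, norm_real, Real.norm_eq_abs, one_mul, abs_sub_comm]

lemma one_sub_norm_le_norm_sub_div_norm (z : ℂ) {v : ℂ} (hv : v ≠ 0) :
    1 - ‖z‖ ≤ ‖z - v / ‖v‖‖ := by
  have := norm_sub_norm_le (v / ‖v‖) z
  rw [norm_div_norm hv, norm_sub_rev] at this
  linarith

lemma norm_div_norm_sub_div_norm_le {z v : ℂ} (hz : z ≠ 0) (hv : v ≠ 0) :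
    ‖z / ‖z‖ - v / ‖v‖‖ ≤ 2 * ‖z - v‖ / ‖v‖ := by
  have hz' : (‖z‖ : ℂ) ≠ 0 := ofReal_ne_zero.2 (norm_ne_zero_iff.2 hz)
  have hv' : (‖v‖ : ℂ) ≠ 0 := ofReal_ne_zero.2 (norm_ne_zero_iff.2 hv)
  have hsplit : z / ‖z‖ - v / ‖v‖ = (z - v) / ‖v‖ + z / ‖z‖ * ((‖v‖ - ‖z‖ : ℝ) : ℂ) / ‖v‖ := by
    push_cast
    field_simp
    ring
  have hrad : |‖v‖ - ‖z‖| ≤ ‖z - v‖ := by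
    rw [norm_sub_rev]
    exact abs_norm_sub_norm_le v z
  calc ‖z / ‖z‖ - v / ‖v‖‖ ≤ ‖z - v‖ / ‖v‖ + |‖v‖ - ‖z‖| / ‖v‖ := by
        rw [hsplit]
        refine (norm_add_le _ _).trans_eq ?_
        rw [norm_div, norm_div, norm_mul, norm_div_norm hz, norm_real, norm_real, norm_norm,
          Real.norm_eq_abs, one_mul]
    _ ≤ 2 * ‖z - v‖ / ‖v‖ := by
        rw [← add_div, two_mul]
        gcongr

lemma norm_sub_div_norm_le_four_mul_norm_sub {y z w : ℂ} (hy : ‖y‖ = 1) (hz : z ≠ 0)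
    (hstolz : ‖y - z / ‖z‖‖ ≤ 2 * (1 - ‖z‖)) (hw0 : w ≠ 0) (hw1 : ‖w‖ ≤ 1)
    (hsep : 4 * (1 - ‖w‖) ≤ ‖y - w / ‖w‖‖) :
    ‖z - w / ‖w‖‖ ≤ 4 * ‖z - w‖ := by
  have hw_half : 1 / 2 ≤ ‖w‖ := by
    have := (norm_sub_le y (w / ‖w‖)).trans_eq (by rw [hy, norm_div_norm hw0])
    linarith
  have hproj : ‖z / ‖z‖ - w / ‖w‖‖ ≤ 4 * ‖z - w‖ := by
    refine (norm_div_norm_sub_div_norm_le hz hw0).trans ?_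
    rw [div_le_iff₀ (by linarith)]
    nlinarith [norm_nonneg (z - w)]
  have hwz : 1 - ‖w‖ ≤ 3 * ‖z - w‖ := by
    have hy_tri := norm_sub_le_norm_sub_add_norm_sub y (z / ‖z‖) (w / ‖w‖)
    have hnorm := norm_sub_norm_le w z
    rw [norm_sub_rev w z] at hnorm
    linarith
  calc ‖z - w / ‖w‖‖ ≤ ‖z - w‖ + ‖w - w / ‖w‖‖ := norm_sub_le_norm_sub_add_norm_sub _ _ _
    _ ≤ 4 * ‖z - w‖ := by
        rw [norm_sub_div_norm_self hw0, abs_of_nonneg (by linarith)]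
        linarith

lemma neg_mul_le_log_norm_blaschkeFactor_of_stolz {y z w : ℂ} (hy : ‖y‖ = 1) (hz : ‖z‖ < 1)
    (hz0 : z ≠ 0) (hstolz : ‖y - z / ‖z‖‖ ≤ 2 * (1 - ‖z‖)) (hw0 : w ≠ 0) (hw1 : ‖w‖ < 1)
    (hsep : 4 * (1 - ‖w‖) ≤ ‖y - w / ‖w‖‖) :
    -16 * ((1 - ‖z‖ ^ 2) / ‖z - w / ‖w‖‖ ^ 2 * (1 - ‖w‖)) ≤
      Real.log ‖(w - z) / (1 - conj w * z)‖ := by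
  have hfour := norm_sub_div_norm_le_four_mul_norm_sub hy hz0 hstolz hw0 hw1.le hsep
  have hq : 0 < ‖z - w / ‖w‖‖ := by
    linarith [one_sub_norm_le_norm_sub_div_norm z hw0]
  have hwz : w ≠ z := by
    rintro rfl
    simp only [sub_self, norm_zero, mul_zero] at hfour
    linarith
  refine le_trans ?_ (neg_div_le_log_norm_blaschkeFactor hw1 hz hwz)
  rw [neg_mul, neg_le_neg_iff, norm_sub_rev w z]
  calc (1 - ‖w‖ ^ 2) * (1 - ‖z‖ ^ 2) / (2 * ‖z - w‖ ^ 2)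
      ≤ 2 * (1 - ‖w‖) * (1 - ‖z‖ ^ 2) / (2 * (‖z - w / ‖w‖‖ / 4) ^ 2) := by
        have : 0 ≤ 1 - ‖z‖ ^ 2 := by nlinarith [norm_nonneg z]
        gcongr
        · nlinarith [norm_nonneg w]
        · linarith
    _ = 16 * ((1 - ‖z‖ ^ 2) / ‖z - w / ‖w‖‖ ^ 2 * (1 - ‖w‖)) := by
        field_simp
        ring

/-- Lower bound for a Blaschke product in a Stolz region. If `(w_n)` is a Blaschke sequence,
`v(z) = ∑ (1-|z|²)(1-|w_n|)/|z - w_n/|w_n||²`, and `y` is on the unit circle with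
`|y - w_n/|w_n|| ≥ 4(1-|w_n|)` for all `n ≥ n₀`, then there is `C > 0` such that for all
`z` in the Stolz region `|y - z/|z|| ≤ 2(1-|z|)`, the tail of the Blaschke product with
zeros `(w_n)_{n ≥ n₀}` satisfies `log |B(z)| ≥ -C v(z)`. -/
theorem stmt11 (w : ℕ → ℂ) (hw : ∀ n, 0 < ‖w n‖ ∧ ‖w n‖ < 1)
    (hBl : Summable fun n => 1 - ‖w n‖) (y : ℂ) (hy : ‖y‖ = 1) (n₀ : ℕ)
    (hsep : ∀ n, n₀ ≤ n → 4 * (1 - ‖w n‖) ≤ ‖y - w n / (‖w n‖ : ℂ)‖) :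
    ∃ C > (0 : ℝ), ∀ z : ℂ, ‖z‖ < 1 → z ≠ 0 → ‖y - z / (‖z‖ : ℂ)‖ ≤ 2 * (1 - ‖z‖) →
      -C * (∑' n : ℕ, (1 - ‖z‖ ^ 2) / ‖z - w n / (‖w n‖ : ℂ)‖ ^ 2 * (1 - ‖w n‖)) ≤
        ∑' n : {n : ℕ // n₀ ≤ n},
          Real.log ‖(w n - z) / (1 - (starRingEnd ℂ) (w n) * z)‖ := by
  refine ⟨16, by norm_num, fun z hz hz0 hstolz => ?_⟩
  have hw0 n : w n ≠ 0 := norm_pos_iff.1 (hw n).1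
  set v : ℕ → ℝ := fun n => (1 - ‖z‖ ^ 2) / ‖z - w n / (‖w n‖ : ℂ)‖ ^ 2 * (1 - ‖w n‖)
  set L : {n : ℕ // n₀ ≤ n} → ℝ := fun n => Real.log ‖(w n - z) / (1 - conj (w n) * z)‖
  have hz1 : 0 ≤ 1 - ‖z‖ ^ 2 := by nlinarith [norm_nonneg z]
  have hv_nonneg n : 0 ≤ v n := mul_nonneg (by positivity) (by linarith [(hw n).2])
  have hv : Summable v := by
    refine (hBl.mul_left ((1 - ‖z‖ ^ 2) / (1 - ‖z‖) ^ 2)).of_nonneg_of_le hv_nonneg fun n => ?_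
    have := one_sub_norm_le_norm_sub_div_norm z (hw0 n)
    have : 0 ≤ 1 - ‖w n‖ := by linarith [(hw n).2]
    dsimp only [v]
    gcongr
  have hL (n : {n : ℕ // n₀ ≤ n}) : -16 * v n ≤ L n :=
    neg_mul_le_log_norm_blaschkeFactor_of_stolz hy hz hz0 hstolz (hw0 n) (hw n).2 (hsep n n.2)
  have hL_nonpos n : L n ≤ 0 := log_norm_blaschkeFactor_nonpos (hw n).2.le hz.le
  have hv_sub : Summable fun n : {n : ℕ // n₀ ≤ n} => v n := hv.subtype _
  have hL_sum : Summable L := (hv_sub.mul_left 16).of_norm_bounded fun n => by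
    rw [Real.norm_eq_abs, abs_of_nonpos (hL_nonpos n)]
    linarith [hL n]
  calc -16 * ∑' n, v n ≤ -16 * ∑' n : {n : ℕ // n₀ ≤ n}, v n := by
        have : ∑' n : {n : ℕ // n₀ ≤ n}, v n ≤ ∑' n, v n :=
          tsum_comp_le_tsum_of_inj hv hv_nonneg Subtype.val_injective
        linarith
    _ = ∑' n : {n : ℕ // n₀ ≤ n}, -16 * v n := tsum_mul_left.symm
    _ ≤ ∑' n, L n := (hv_sub.mul_left _).tsum_le_tsum hL hL_sum
end

section
/- Let z be in the closed unit disk with z ≠ 0, and let w_n be in the open unit disk with |y - w_n/|w_n|| ≥ 4(1-|w_n|) and |y - z/|z|| ≤ 2(1-|z|) for a point y on the unit circle. Then there is an absolute constant c > 0 such that |z - w_n| ≥ c·|z - w_n/|w_n||, hence (1-|z|²)(1-|w_n|²)/|z-w_n|² ≤ c'·(1-|z|²)(1-|w_n|)/|z - w_n/|w_n||². -/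
/-!
Write `a = 1 - ‖z‖`, `b = 1 - ‖w‖` and `ẑ, ŵ` for the radial projections. The two conditions
at `y` separate the projections: `‖ẑ - ŵ‖ ≥ 4b - 2a`. Since `4b ≤ ‖y - ŵ‖ ≤ 2` forces
`‖w‖ ≥ 1/2`, comparing `z - w` with `ẑ - ŵ` gives `‖z - w‖ ≥ b - a/2`, while `‖z - w‖ ≥ a - b`
trivially; together `‖z - w‖ ≥ b/3`. Hence `‖z - ŵ‖ ≤ ‖z - w‖ + b ≤ 4‖z - w‖`, and the second
inequality follows from `1 - ‖w‖² ≤ 2b`.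
-/

namespace NormedSpace

variable {V : Type*} [NormedAddCommGroup V] [NormedSpace ℝ V]

theorem norm_normalize_le_one (x : V) : ‖normalize x‖ ≤ 1 := by
  rcases eq_or_ne x 0 with rfl | hx
  · simp
  · exact (norm_normalize hx).le

theorem norm_sub_normalize {x : V} (hx : x ≠ 0) : ‖x - normalize x‖ = |‖x‖ - 1| := by
  have hsplit : x - normalize x = (‖x‖ - 1) • normalize x := by
    rw [sub_smul, one_smul, norm_smul_normalize]
  rw [hsplit, norm_smul, norm_normalize hx, Real.norm_eq_abs, mul_one]

theorem norm_mul_norm_normalize_sub_le (x y : V) :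
    ‖x‖ * ‖normalize x - normalize y‖ ≤ 2 * ‖x - y‖ := by
  have hsplit : ‖x‖ • (normalize x - normalize y) = (x - y) + (‖y‖ - ‖x‖) • normalize y := by
    rw [smul_sub, norm_smul_normalize, sub_smul, norm_smul_normalize]
    abel
  calc ‖x‖ * ‖normalize x - normalize y‖
      = ‖(x - y) + (‖y‖ - ‖x‖) • normalize y‖ := by
        rw [← hsplit, norm_smul, norm_norm]
    _ ≤ ‖x - y‖ + |‖y‖ - ‖x‖| * 1 := by
        grw [norm_add_le, norm_smul, Real.norm_eq_abs, norm_normalize_le_one]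
    _ ≤ 2 * ‖x - y‖ := by
        rw [mul_one, abs_sub_comm]
        linarith [abs_norm_sub_norm_le x y]

end NormedSpace

section Separation

open NormedSpace

variable {V : Type*} [NormedAddCommGroup V] [NormedSpace ℝ V] {y z w : V}

theorem norm_sub_normalize_le_four_mul_norm_sub (hy : ‖y‖ ≤ 1) (hw : ‖w‖ ≤ 1)
    (hzy : ‖y - normalize z‖ ≤ 2 * (1 - ‖z‖)) (hwy : 4 * (1 - ‖w‖) ≤ ‖y - normalize w‖) :
    ‖z - normalize w‖ ≤ 4 * ‖z - w‖ := by
  have hw_half : 1 / 2 ≤ ‖w‖ := by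
    linarith [norm_sub_le y (normalize w), norm_normalize_le_one w]
  have hsep : 4 * (1 - ‖w‖) - 2 * (1 - ‖z‖) ≤ ‖normalize w - normalize z‖ := by
    linarith [norm_sub_le_norm_sub_add_norm_sub y (normalize z) (normalize w),
      norm_sub_rev (normalize z) (normalize w)]
  have hclose : (1 - ‖w‖) - (1 - ‖z‖) / 2 ≤ ‖z - w‖ := by
    nlinarith [norm_mul_norm_normalize_sub_le w z, norm_sub_rev w z,
      norm_nonneg (normalize w - normalize z)]
  have hradial : ‖w‖ - ‖z‖ ≤ ‖z - w‖ := by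
    linarith [norm_sub_norm_le w z, norm_sub_rev w z]
  have hw_proj : ‖w - normalize w‖ = 1 - ‖w‖ := by
    rw [norm_sub_normalize (norm_pos_iff.1 (by linarith)), abs_of_nonpos (by linarith)]
    ring
  linarith [norm_sub_le_norm_sub_add_norm_sub z w (normalize w)]

theorem ne_normalize_of_separated (hw0 : w ≠ 0) (hw : ‖w‖ < 1)
    (hzy : ‖y - normalize z‖ ≤ 2 * (1 - ‖z‖)) (hwy : 4 * (1 - ‖w‖) ≤ ‖y - normalize w‖) :
    z ≠ normalize w := by
  rintro rfl
  rw [normalize_normalize, norm_normalize hw0] at hzy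
  linarith

end Separation

theorem mul_one_sub_sq_div_sq_le {A r d D : ℝ} (hA : 0 ≤ A) (hr : r ≤ 1) (hD : 0 < D)
    (hDd : D ≤ 4 * d) : A * (1 - r ^ 2) / d ^ 2 ≤ 32 * (A * (1 - r) / D ^ 2) := by
  have hnum : A * (1 - r ^ 2) ≤ A * (2 * (1 - r)) :=
    mul_le_mul_of_nonneg_left (by nlinarith [sq_nonneg (1 - r)]) hA
  have hden : D ^ 2 / 16 ≤ d ^ 2 := by nlinarith
  calc A * (1 - r ^ 2) / d ^ 2 ≤ A * (2 * (1 - r)) / (D ^ 2 / 16) :=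
        div_le_div₀ (by nlinarith) hnum (by positivity) hden
    _ = 32 * (A * (1 - r) / D ^ 2) := by ring

theorem Complex.div_norm_eq_normalize (z : ℂ) : z / (‖z‖ : ℂ) = NormedSpace.normalize z := by
  rw [NormedSpace.normalize, Complex.real_smul, Complex.ofReal_inv, div_eq_inv_mul]

/-- There are absolute constants `c, c' > 0` such that: if `y` is on the unit circle,
`z` is in the closed unit disk with `z ≠ 0` and `|y - z/|z|| ≤ 2(1-|z|)`, and `w` is in the
open unit disk with `w ≠ 0` and `|y - w/|w|| ≥ 4(1-|w|)`, then `|z - w| ≥ c |z - w/|w||`,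
hence `(1-|z|²)(1-|w|²)/|z-w|² ≤ c' (1-|z|²)(1-|w|)/|z - w/|w||²`. -/
theorem stmt19 : ∃ c > (0 : ℝ), ∃ c' > (0 : ℝ),
    ∀ y z w : ℂ, ‖y‖ = 1 → ‖z‖ ≤ 1 → z ≠ 0 → ‖y - z / (‖z‖ : ℂ)‖ ≤ 2 * (1 - ‖z‖) →
      ‖w‖ < 1 → w ≠ 0 → 4 * (1 - ‖w‖) ≤ ‖y - w / (‖w‖ : ℂ)‖ →
      c * ‖z - w / (‖w‖ : ℂ)‖ ≤ ‖z - w‖ ∧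
      (1 - ‖z‖ ^ 2) * (1 - ‖w‖ ^ 2) / ‖z - w‖ ^ 2 ≤
        c' * ((1 - ‖z‖ ^ 2) * (1 - ‖w‖) / ‖z - w / (‖w‖ : ℂ)‖ ^ 2) := by
  refine ⟨1 / 4, by norm_num, 32, by norm_num, ?_⟩
  intro y z w hy hz _ hzy hw hw0 hwy
  simp only [Complex.div_norm_eq_normalize] at hzy hwy ⊢
  have hfour := norm_sub_normalize_le_four_mul_norm_sub hy.le hw.le hzy hwy
  refine ⟨by linarith, mul_one_sub_sq_div_sq_le ?_ hw.le ?_ hfour⟩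
  · nlinarith [norm_nonneg z]
  · exact norm_pos_iff.2 (sub_ne_zero.2 (ne_normalize_of_separated hw0 hw hzy hwy))
end
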